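/- arXiv:2604.12550 — 2 statements merged into one kernel-verified Lean document; each statement's English description precedes it below -/
import Mathlib

section
/- Let Q be a finite quandle and Z₀ = ker θ_{G(Q)}. An element z ∈ Z₀ has finite order if and only if z lies in the commutator subgroup of G(Q). -/
open scoped Quandles
/-- The inner automorphism group of a rack/quandle `Q`: the subgroup of permutations
of `Q` generated by the left translations `L_x = Rack.act' x`. -/
def QdlInn (Q : Type*) [Rack Q] : Subgroup (Equiv.Perm Q) :=
  Subgroup.closure (Set.range (Rack.act' (R := Q)))

/-- The quandle morphism `θ : Q → Conj (Inn Q)`, `x ↦ L_x`. -/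
def QdlTheta (Q : Type*) [Rack Q] : ShelfHom Q (Quandle.Conj (QdlInn Q)) where
  toFun x := ⟨Rack.act' x, Subgroup.subset_closure ⟨x, rfl⟩⟩
  map_act' := by
    intro x y
    simp only [Quandle.conj_act_eq_conj]
    exact Subtype.ext (Rack.ad_conj x y)

/-- The induced group morphism `θ_{G(Q)} : G(Q) → Inn(Q)`. -/
def QdlThetaG (Q : Type*) [Rack Q] : Rack.EnvelGroup Q →* QdlInn Q :=
  Rack.toEnvelGroup.map (QdlTheta Q)

/-- `Z₀`, the kernel of `θ_{G(Q)}`. -/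
def QdlZ0 (Q : Type*) [Rack Q] : Subgroup (Rack.EnvelGroup Q) :=
  (QdlThetaG Q).ker

section Reps

variable {Q : Type*} {V : Type*} [AddCommGroup V] [Module ℂ V]

/-- `ρ : Q → GL(V)` is a quandle (rack) representation: `ρ(x ◃ y) = ρ(x) ρ(y) ρ(x)⁻¹`. -/
def IsQdlRep [Shelf Q] (ρ : Q → (V →ₗ[ℂ] V)ˣ) : Prop :=
  ∀ x y : Q, ρ (x ◃ y) = ρ x * ρ y * (ρ x)⁻¹

/-- A family `ρ : Q → GL(V)` is irreducible if the only subspaces invariant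
under all `ρ x` are `0` and `V`. -/
def QdlIrred (ρ : Q → (V →ₗ[ℂ] V)ˣ) : Prop :=
  ∀ W : Submodule ℂ V, (∀ x : Q, ∀ v ∈ W, (ρ x : V →ₗ[ℂ] V) v ∈ W) → W = ⊥ ∨ W = ⊤

/-- A group representation `σ : G →* GL(V)` is irreducible if the only subspaces
invariant under all `σ g` are `0` and `V`. -/
def GrpIrred {G : Type*} [Group G] (σ : G →* (V →ₗ[ℂ] V)ˣ) : Prop :=
  ∀ W : Submodule ℂ V, (∀ g : G, ∀ v ∈ W, (σ g : V →ₗ[ℂ] V) v ∈ W) → W = ⊥ ∨ W = ⊤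

end Reps

/-- A character of a quandle: a map `χ : Q → ℂˣ` with `χ(x ◃ y) = χ(y)`. -/
def QdlChar {Q : Type*} [Shelf Q] (χ : Q → ℂˣ) : Prop :=
  ∀ x y : Q, χ (x ◃ y) = χ y

/-!
The abelianization of `G(Q)` embeds into the free abelian group on the orbits of `Q`
(the generator `x` goes to its orbit), so it is torsion-free and every element of finite order
lies in `[G(Q), G(Q)]`. Conversely, `g x g⁻¹ = g • x` for the action of `G(Q)` on `Q`, so the
kernel of this action is central; for finite `Q` the centre thus has finite index `n`, and
the transfer `G(Q) → Z(G(Q))`, `g ↦ gⁿ`, kills commutators, so `zⁿ = 1` for every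
`z ∈ [G(Q), G(Q)]`.
-/

open scoped IsMulCommutative in
theorem isOfFinOrder_of_mem_commutator {G : Type*} [Group G]
    [(Subgroup.center G).FiniteIndex] {g : G} (hg : g ∈ commutator G) : IsOfFinOrder g := by
  refine isOfFinOrder_iff_pow_eq_one.mpr
    ⟨(Subgroup.center G).index, Nat.pos_of_ne_zero Subgroup.FiniteIndex.index_ne_zero, ?_⟩
  have hker := Abelianization.commutator_subset_ker (MonoidHom.transferCenterPow G) hg
  simpa [Subtype.ext_iff] using hker

theorem mem_commutator_of_isOfFinOrder {G : Type*} [Group G]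
    [IsMulTorsionFree (Abelianization G)] {g : G} (hg : IsOfFinOrder g) : g ∈ commutator G := by
  rw [← Abelianization.ker_of, MonoidHom.mem_ker]
  exact (Abelianization.of.isOfFinOrder hg).eq_one'

namespace Rack

variable {R : Type*} [Rack R]

theorem toEnvelGroup_act (x y : R) :
    toEnvelGroup R (x ◃ y) = toEnvelGroup R x * toEnvelGroup R y * (toEnvelGroup R x)⁻¹ :=
  (toEnvelGroup R).map_act

@[simp]
theorem toEnvelGroup.map_toEnvelGroup {G : Type*} [Group G] (f : R →◃ Quandle.Conj G) (x : R) :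
    toEnvelGroup.map f (toEnvelGroup R x) = f x :=
  rfl

theorem EnvelGroup.hom_ext {G : Type*} [Group G] {f g : EnvelGroup R →* G}
    (h : ∀ x, f (toEnvelGroup R x) = g (toEnvelGroup R x)) : f = g :=
  toEnvelGroup.map.symm.injective (DFunLike.ext _ _ h)

open Subgroup in
theorem EnvelGroup.closure_range_toEnvelGroup :
    closure (Set.range (toEnvelGroup R)) = ⊤ := by
  set H := closure (Set.range (toEnvelGroup R))
  let ι : R →◃ Quandle.Conj H :=
    { toFun x := ⟨toEnvelGroup R x, subset_closure ⟨x, rfl⟩⟩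
      map_act' := Subtype.ext (toEnvelGroup R).map_act }
  have hsection : H.subtype.comp (toEnvelGroup.map ι) = MonoidHom.id _ :=
    EnvelGroup.hom_ext fun _ => rfl
  rw [eq_top_iff', ← H.range_subtype]
  exact fun g => ⟨toEnvelGroup.map ι g, DFunLike.congr_fun hsection g⟩

theorem EnvelGroup.conj_toEnvelGroup (g : EnvelGroup R) (y : R) :
    g * toEnvelGroup R y * g⁻¹ = toEnvelGroup R (envelAction g y) := by
  have hg : g ∈ Subgroup.closure (Set.range (toEnvelGroup R)) := by
    simp [EnvelGroup.closure_range_toEnvelGroup]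
  induction hg using Subgroup.closure_induction generalizing y with
  | mem g hg => obtain ⟨x, rfl⟩ := hg; exact (toEnvelGroup_act x y).symm
  | one => simp
  | mul g h _ _ ihg ihh =>
    rw [map_mul, Equiv.Perm.mul_apply, ← ihg, ← ihh]; group
  | inv g _ ih =>
    have h := ih ((envelAction g)⁻¹ y)
    rw [← Equiv.Perm.mul_apply, mul_inv_cancel, Equiv.Perm.one_apply] at h
    rw [map_inv, ← h]; group

theorem EnvelGroup.ker_envelAction_le_center :
    (envelAction (R := R)).ker ≤ Subgroup.center (EnvelGroup R) := by
  intro z hz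
  have hconj : MulAut.conj z = MulEquiv.refl _ := by
    refine MulEquiv.toMonoidHom_injective (EnvelGroup.hom_ext fun y => ?_)
    simp [EnvelGroup.conj_toEnvelGroup, MonoidHom.mem_ker.mp hz]
  rw [Subgroup.mem_center_iff]
  intro g
  have hzg : z * g * z⁻¹ = g := by simpa using DFunLike.congr_fun hconj g
  exact (mul_inv_eq_iff_eq_mul.mp hzg).symm

instance EnvelGroup.finiteIndex_center [Finite R] :
    (Subgroup.center (EnvelGroup R)).FiniteIndex :=
  Subgroup.finiteIndex_of_le EnvelGroup.ker_envelAction_le_center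

variable (R) in
def Orbits : Type _ := Quot fun y z : R => ∃ x, x ◃ y = z

def Orbits.mk (x : R) : Orbits R := Quot.mk _ x

theorem Orbits.mk_act (x y : R) : Orbits.mk (x ◃ y) = Orbits.mk y :=
  (Quot.sound ⟨x, rfl⟩).symm

noncomputable def orbitIndicator :
    R →◃ Quandle.Conj (Multiplicative (Orbits R →₀ ℤ)) where
  toFun x := .ofAdd (Finsupp.single (Orbits.mk x) 1)
  map_act' := by
    intro x y
    rw [Quandle.conj_act_eq_conj, mul_inv_cancel_comm, Orbits.mk_act]

theorem orbitIndicator_apply (x : R) :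
    orbitIndicator x = .ofAdd (Finsupp.single (Orbits.mk x) 1) :=
  rfl

def Orbits.lift {A : Type*} (f : R → A) (hf : ∀ x y, f (x ◃ y) = f y) : Orbits R → A :=
  Quot.lift f (by rintro _ _ ⟨x, rfl⟩; exact (hf x _).symm)

@[simp]
theorem Orbits.lift_mk {A : Type*} (f : R → A) (hf : ∀ x y, f (x ◃ y) = f y) (x : R) :
    Orbits.lift f hf (Orbits.mk x) = f x :=
  rfl

noncomputable def orbitsToAbelianization :
    Multiplicative (Orbits R →₀ ℤ) →* Abelianization (EnvelGroup R) :=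
  AddMonoidHom.toMultiplicativeLeft <| Finsupp.liftAddHom fun o =>
    zmultiplesHom _ <| Orbits.lift (fun x => .ofMul (Abelianization.of (toEnvelGroup R x)))
      (fun x y => by simp) o

theorem orbitsToAbelianization_comp_map_orbitIndicator :
    orbitsToAbelianization.comp (toEnvelGroup.map orbitIndicator) =
      (Abelianization.of : EnvelGroup R →* _) :=
  EnvelGroup.hom_ext fun x => by
    simp [orbitsToAbelianization, orbitIndicator_apply]

instance EnvelGroup.isMulTorsionFree_abelianization :
    IsMulTorsionFree (Abelianization (EnvelGroup R)) :=
  have hleft : Function.LeftInverse orbitsToAbelianization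
      (Abelianization.lift (toEnvelGroup.map orbitIndicator)) := fun a =>
    QuotientGroup.induction_on a (DFunLike.congr_fun orbitsToAbelianization_comp_map_orbitIndicator)
  Function.Injective.isMulTorsionFree _ hleft.injective

end Rack

theorem stmt12_general (Q : Type*) [Quandle Q] [Finite Q]
    (z : Rack.EnvelGroup Q) :
    IsOfFinOrder z ↔ z ∈ commutator (Rack.EnvelGroup Q) :=
  ⟨mem_commutator_of_isOfFinOrder, isOfFinOrder_of_mem_commutator⟩

/-- an element of `Z₀ = ker θ_{G(Q)}` (`Q` a finite quandle) has finite order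
iff it lies in the commutator subgroup of `G(Q)`. -/
theorem stmt12 (Q : Type*) [Quandle Q] [Finite Q]
    (z : Rack.EnvelGroup Q) (hz : z ∈ QdlZ0 Q) :
    IsOfFinOrder z ↔ z ∈ commutator (Rack.EnvelGroup Q) :=
  stmt12_general Q z
end

section
/- Let Q be a finite quandle and Z₀ = ker θ_{G(Q)}. Let N be a subgroup of Z₀ that is torsion-free (its only element of finite order is the identity) and such that every element of Z₀ is a product of an element of N and an element of Z₀ of finite order. Then N is a normal subgroup of G(Q) and the quotient group G(Q)/N is finite. -/
open scoped Quandles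
/-!
Elements of `Z₀` act trivially on `Q`, and conjugation in `G(Q)` satisfies
`g x g⁻¹ = θ(g)(x)` for `x ∈ Q`, so `Z₀` commutes with the generators and is central; in
particular `N` is normal. Since `Inn(Q)` is finite, `Z₀` has finite index in the finitely
generated group `G(Q)`, so by Schreier's lemma `Z₀` is a finitely generated abelian group.
The decomposition hypothesis says that `Z₀ / N` is torsion, hence finite, and so `N` has
finite index.
-/

namespace Subgroup

variable {G : Type*} [Group G]

theorem normal_of_le_center {N : Subgroup G} (h : N ≤ center G) : N.Normal where
  conj_mem n hn g := by
    rwa [mem_center_iff.mp (h hn) g, mul_inv_cancel_right]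

theorem isMulCommutative_of_le_center {N : Subgroup G} (h : N ≤ center G) :
    IsMulCommutative N :=
  le_centralizer_iff_isMulCommutative.mp (h.trans (center_le_centralizer _))

open scoped IsMulCommutative in
theorem finiteIndex_of_isMulTorsion_quotient [IsMulCommutative G] [Group.FG G] (H : Subgroup G)
    (h : IsMulTorsion (G ⧸ H)) : H.FiniteIndex :=
  haveI := CommGroup.finite_of_fg_isMulTorsion (G := G ⧸ H) h
  finiteIndex_of_finite_quotient

theorem finiteIndex_of_le_of_forall_eq_mul_isOfFinOrder [Group.FG G] {Z N : Subgroup G}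
    [Z.FiniteIndex] [IsMulCommutative Z] (hNZ : N ≤ Z)
    (hdecomp : ∀ z ∈ Z, ∃ n ∈ N, ∃ t, IsOfFinOrder t ∧ z = n * t) : N.FiniteIndex := by
  have htor : IsMulTorsion (Z ⧸ N.subgroupOf Z) := by
    intro q
    obtain ⟨z, rfl⟩ := QuotientGroup.mk_surjective q
    obtain ⟨n, hn, t, ht, hz⟩ := hdecomp z z.2
    have htZ : t ∈ Z := by simpa [hz] using Z.mul_mem (Z.inv_mem (hNZ hn)) z.2
    obtain rfl : z = ⟨n, hNZ hn⟩ * ⟨t, htZ⟩ := Subtype.ext hz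
    rw [QuotientGroup.mk_mul, (QuotientGroup.eq_one_iff (N := N.subgroupOf Z) _).mpr hn, one_mul]
    exact (QuotientGroup.mk' _).isOfFinOrder (Submonoid.isOfFinOrder_coe.mp ht)
  have := (N.subgroupOf Z).finiteIndex_of_isMulTorsion_quotient htor
  refine ⟨?_⟩
  rw [← relIndex_mul_index hNZ]
  exact mul_ne_zero FiniteIndex.index_ne_zero FiniteIndex.index_ne_zero

end Subgroup

namespace Rack.EnvelGroup

variable {Q : Type*} [Rack Q]

@[elab_as_elim]
theorem induction_on {p : EnvelGroup Q → Prop} (g : EnvelGroup Q) (one : p 1)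
    (incl : ∀ x, p (toEnvelGroup Q x)) (mul : ∀ a b, p a → p b → p (a * b))
    (inv : ∀ a, p a → p a⁻¹) : p g :=
  Quotient.inductionOn g fun a => by
    induction a with
    | unit => exact one
    | incl x => exact incl x
    | mul a b ha hb => exact mul ⟦a⟧ ⟦b⟧ ha hb
    | inv a ha => exact inv ⟦a⟧ ha

theorem closure_range_toEnvelGroup_s14 :
    Subgroup.closure (Set.range (toEnvelGroup Q : Q → EnvelGroup Q)) = ⊤ :=
  eq_top_iff.mpr fun g _ => g.induction_on (one_mem _)
    (fun x => Subgroup.subset_closure ⟨x, rfl⟩) (fun _ _ => mul_mem) (fun _ => inv_mem)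

instance [Finite Q] : Group.FG (EnvelGroup Q) :=
  Group.fg_iff.mpr ⟨_, closure_range_toEnvelGroup_s14, Set.finite_range _⟩

theorem toEnvelGroup_envelAction (g : EnvelGroup Q) (x : Q) :
    (toEnvelGroup Q (envelAction g x) : EnvelGroup Q) = g * toEnvelGroup Q x * g⁻¹ := by
  induction g using induction_on generalizing x with
  | one => simp
  | incl y => exact (toEnvelGroup Q).map_act'
  | mul a b ha hb => rw [map_mul, Equiv.Perm.mul_apply, ha, hb]; group
  | inv a ha =>
    have hconj := ha ((envelAction a)⁻¹ x)
    rw [← Equiv.Perm.mul_apply, mul_inv_cancel, Equiv.Perm.one_apply] at hconj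
    rw [map_inv, hconj]
    group

theorem ker_envelAction_le_center_s14 :
    (envelAction (R := Q)).ker ≤ Subgroup.center (EnvelGroup Q) := by
  intro z hz
  have hgen : Subgroup.closure (Set.range (toEnvelGroup Q : Q → EnvelGroup Q)) ≤
      Subgroup.centralizer {z} := by
    refine Subgroup.closure_le _ |>.mpr ?_
    rintro _ ⟨x, rfl⟩
    rw [SetLike.mem_coe, Subgroup.mem_centralizer_singleton_iff]
    have hconj := toEnvelGroup_envelAction z x
    rwa [MonoidHom.mem_ker.mp hz, Equiv.Perm.one_apply, eq_mul_inv_iff_mul_eq] at hconj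
  rw [closure_range_toEnvelGroup_s14, top_le_iff] at hgen
  exact Subgroup.mem_center_iff.mpr fun g =>
    Subgroup.mem_centralizer_singleton_iff.mp (hgen ▸ Subgroup.mem_top g)

end Rack.EnvelGroup

theorem qdlZ0_eq_ker_envelAction (Q : Type*) [Rack Q] :
    QdlZ0 Q = (Rack.envelAction (R := Q)).ker := by
  have : (QdlInn Q).subtype.comp (QdlThetaG Q) = Rack.envelAction :=
    MonoidHom.eq_of_eqOn_dense Rack.EnvelGroup.closure_range_toEnvelGroup_s14
      (by rintro _ ⟨x, rfl⟩; rfl)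
  rw [QdlZ0, ← this, MonoidHom.ker_comp_of_injective _ _ Subtype.val_injective]

instance qdlZ0_finiteIndex (Q : Type*) [Rack Q] [Finite Q] : (QdlZ0 Q).FiniteIndex :=
  Subgroup.finiteIndex_ker _

theorem qdlZ0_le_center (Q : Type*) [Rack Q] : QdlZ0 Q ≤ Subgroup.center (Rack.EnvelGroup Q) :=
  (qdlZ0_eq_ker_envelAction Q).le.trans Rack.EnvelGroup.ker_envelAction_le_center_s14

theorem stmt14_general (Q : Type*) [Quandle Q] [Finite Q] (N : Subgroup (Rack.EnvelGroup Q))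
    (hNZ : N ≤ QdlZ0 Q)
    (hdecomp : ∀ z ∈ QdlZ0 Q, ∃ n ∈ N, ∃ t ∈ QdlZ0 Q, IsOfFinOrder t ∧ z = n * t) :
    N.Normal ∧ Finite (Rack.EnvelGroup Q ⧸ N) := by
  have := Subgroup.isMulCommutative_of_le_center (qdlZ0_le_center Q)
  have : N.FiniteIndex := Subgroup.finiteIndex_of_le_of_forall_eq_mul_isOfFinOrder hNZ
    fun z hz => by
      obtain ⟨n, hn, t, -, ht, hzt⟩ := hdecomp z hz
      exact ⟨n, hn, t, ht, hzt⟩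
  exact ⟨Subgroup.normal_of_le_center (hNZ.trans (qdlZ0_le_center Q)), inferInstance⟩

/-- if `N ≤ Z₀` is torsion-free and every element of `Z₀` is a product of an
element of `N` and a finite-order element of `Z₀`, then `N` is normal in `G(Q)` and the
quotient `G(Q)/N` is finite. -/
theorem stmt14 (Q : Type*) [Quandle Q] [Finite Q] (N : Subgroup (Rack.EnvelGroup Q))
    (hNZ : N ≤ QdlZ0 Q)
    (htf : ∀ n ∈ N, IsOfFinOrder n → n = 1)
    (hdecomp : ∀ z ∈ QdlZ0 Q, ∃ n ∈ N, ∃ t ∈ QdlZ0 Q, IsOfFinOrder t ∧ z = n * t) :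
    N.Normal ∧ Finite (Rack.EnvelGroup Q ⧸ N) :=
  stmt14_general Q N hNZ hdecomp
end
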